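/- Under the Setup, the four vertices v₁, v₂, v₃, v₄ are not contained in any closed half sphere: there is no w ∈ S² such that ⟨v_i, w⟩ ≥ 0 for all i ∈ {1,2,3,4}. -/

import Mathlib

open MeasureTheory Real
open scoped RealInnerProductSpace

noncomputable section

abbrev E3 := EuclideanSpace ℝ (Fin 3)

/-- The surface (area) measure `σ` on the unit sphere `S² ⊆ ℝ³`, normalized so that
`σ(S²) = 4π`. -/
def sphereArea : Measure (Metric.sphere (0 : E3) 1) := (volume : Measure E3).toSphere

/-- The cross product on `ℝ³`. -/
def cross3 (a b : E3) : E3 :=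
  (WithLp.equiv 2 (Fin 3 → ℝ)).symm
    ![a 1 * b 2 - a 2 * b 1, a 2 * b 0 - a 0 * b 2, a 0 * b 1 - a 1 * b 0]

/-- The determinant of the 3×3 matrix with rows `a`, `b`, `c`. -/
def det3 (a b c : E3) : ℝ :=
  a 0 * (b 1 * c 2 - b 2 * c 1) - a 1 * (b 0 * c 2 - b 2 * c 0) +
    a 2 * (b 0 * c 1 - b 1 * c 0)
/-!
Uniqueness pins `v ℓ` down as the unit outward normal of the face of the tetrahedron with
vertices `z i` opposite `z ℓ`. Up to the common factor `tetraDet z`, these normals are the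
cross products `faceNormal z ℓ`, whose lengths are twice the face areas and which sum to zero
(Minkowski's relation for a tetrahedron). If every `⟪v ℓ, w⟫` is nonnegative, the zero sum forces
all of them to vanish; as any three face normals are linearly independent
(`det3 = -(tetraDet z)²`), this gives `w = 0`.
-/

lemma inner_cross3 (a b c : E3) : ⟪cross3 a b, c⟫ = det3 a b c := by
  simp only [cross3, det3, WithLp.equiv_symm_apply, PiLp.inner_apply, RCLike.inner_apply,
    ringHom_apply, Fin.sum_univ_three, Matrix.cons_val_zero, Matrix.cons_val_one, Matrix.cons_val]
  ring

lemma det3_eq_basisFun_det (a b c : E3) :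
    det3 a b c = (EuclideanSpace.basisFun (Fin 3) ℝ).toBasis.det ![a, b, c] := by
  rw [Module.Basis.det_apply, Matrix.det_fin_three]
  simp only [det3, Module.Basis.toMatrix_apply, OrthonormalBasis.coe_toBasis_repr_apply,
    EuclideanSpace.basisFun_repr, Matrix.cons_val_zero, Matrix.cons_val_one, Matrix.cons_val]
  ring

lemma det3_ne_zero_iff_span_eq_top (a b c : E3) :
    det3 a b c ≠ 0 ↔ Submodule.span ℝ (Set.range ![a, b, c]) = ⊤ := by
  rw [det3_eq_basisFun_det, ← isUnit_iff_ne_zero, ← Module.Basis.is_basis_iff_det,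
    and_iff_right_iff_imp]
  exact fun h => linearIndependent_of_top_le_span_of_card_eq_finrank h.ge (by simp)

section InnerProductSpace

variable {ι E : Type*} [NormedAddCommGroup E] [InnerProductSpace ℝ E]

lemma eq_zero_of_forall_inner_eq_zero {f : ι → E} (hf : Submodule.span ℝ (Set.range f) = ⊤)
    {x : E} (h : ∀ i, ⟪f i, x⟫ = 0) : x = 0 := by
  have : Submodule.span ℝ (Set.range f) ≤ (ℝ ∙ x)ᗮ := by
    rw [Submodule.span_le]
    rintro _ ⟨i, rfl⟩
    rw [SetLike.mem_coe, Submodule.mem_orthogonal_singleton_iff_inner_right, real_inner_comm]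
    exact h i
  rw [hf, top_le_iff] at this
  have hx : x ∈ (ℝ ∙ x)ᗮ := this ▸ Submodule.mem_top
  exact inner_self_eq_zero.1 (Submodule.mem_orthogonal_singleton_iff_inner_right.1 hx)

lemma inner_eq_zero_of_sum_eq_zero_of_nonneg [Fintype ι] {u : ι → E} {w : E} (hsum : ∑ i, u i = 0)
    (h : ∀ i, 0 ≤ ⟪u i, w⟫) (i : ι) : ⟪u i, w⟫ = 0 :=
  (Finset.sum_eq_zero_iff_of_nonneg fun i _ => h i).1
    (by rw [← sum_inner, hsum, inner_zero_left]) i (Finset.mem_univ i)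

/-- `u` is normal to the face spanned by the points `z i`, `i ≠ ℓ`, and points away from `z ℓ`. -/
def IsFaceNormal (z : ι → E) (ℓ : ι) (u : E) : Prop :=
  (∀ i j, i ≠ ℓ → j ≠ ℓ → ⟪z i, u⟫ = ⟪z j, u⟫) ∧ ∀ i, i ≠ ℓ → ⟪z ℓ, u⟫ < ⟪z i, u⟫

lemma isFaceNormal_of_inner_sub_eq {z : ι → E} {ℓ : ι} {u : E} {c : ℝ} (hc : c < 0)
    (h : ∀ i, i ≠ ℓ → ⟪z ℓ - z i, u⟫ = c) : IsFaceNormal z ℓ u := by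
  refine ⟨fun i j hi hj => ?_, fun i hi => ?_⟩
  · have := (h i hi).trans (h j hj).symm
    rw [inner_sub_left, inner_sub_left] at this
    linarith
  · have := h i hi
    rw [inner_sub_left] at this
    linarith

namespace IsFaceNormal

variable {z : ι → E} {ℓ : ι} {u : E}

lemma smul (h : IsFaceNormal z ℓ u) {t : ℝ} (ht : 0 < t) : IsFaceNormal z ℓ (t • u) := by
  simp only [IsFaceNormal, real_inner_smul_right]
  exact ⟨fun i j hi hj => by rw [h.1 i j hi hj], fun i hi => mul_lt_mul_of_pos_left (h.2 i hi) ht⟩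

lemma ne_zero [Nontrivial ι] (h : IsFaceNormal z ℓ u) : u ≠ 0 := by
  rintro rfl
  obtain ⟨i, hi⟩ := exists_ne ℓ
  simpa using h.2 i hi

end IsFaceNormal

end InnerProductSpace

lemma span_sub_eq_top {V : Type*} [AddCommGroup V] [Module ℝ V] {z : Fin 4 → V}
    (hsum : ∑ i, z i = 0) (hspan : Submodule.span ℝ (Set.range z) = ⊤) :
    Submodule.span ℝ (Set.range ![z 1 - z 0, z 2 - z 0, z 3 - z 0]) = ⊤ := by
  have hmem (a b c : ℝ) : a • (z 1 - z 0) + b • (z 2 - z 0) + c • (z 3 - z 0) ∈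
      Submodule.span ℝ (Set.range ![z 1 - z 0, z 2 - z 0, z 3 - z 0]) := by
    rw [Submodule.mem_span_range_iff_exists_fun]
    exact ⟨![a, b, c], by simp [Fin.sum_univ_three]⟩
  rw [Fin.sum_univ_four] at hsum
  rw [eq_top_iff, ← hspan, Submodule.span_le, Set.range_subset_iff]
  intro i
  rw [SetLike.mem_coe]
  match i with
  | 0 => convert hmem (-4⁻¹) (-4⁻¹) (-4⁻¹) using 1
         linear_combination (norm := module) (4⁻¹ : ℝ) • hsum
  | 1 => convert hmem (3 / 4) (-4⁻¹) (-4⁻¹) using 1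
         linear_combination (norm := module) (4⁻¹ : ℝ) • hsum
  | 2 => convert hmem (-4⁻¹) (3 / 4) (-4⁻¹) using 1
         linear_combination (norm := module) (4⁻¹ : ℝ) • hsum
  | 3 => convert hmem (-4⁻¹) (-4⁻¹) (3 / 4) using 1
         linear_combination (norm := module) (4⁻¹ : ℝ) • hsum

/-- `tetraDet z` is six times the signed volume of the tetrahedron with vertices `z`. -/
def tetraDet (z : Fin 4 → E3) : ℝ := det3 (z 1 - z 0) (z 2 - z 0) (z 3 - z 0)

def faceNormal (z : Fin 4 → E3) : Fin 4 → E3 :=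
  ![cross3 (z 2 - z 1) (z 3 - z 1), cross3 (z 3 - z 0) (z 2 - z 0),
    cross3 (z 1 - z 0) (z 3 - z 0), cross3 (z 2 - z 0) (z 1 - z 0)]

lemma sum_faceNormal (z : Fin 4 → E3) : ∑ ℓ, faceNormal z ℓ = 0 := by
  ext k
  fin_cases k <;>
    simp only [faceNormal, cross3, WithLp.equiv_symm_apply, Fin.sum_univ_four, PiLp.add_apply,
      PiLp.sub_apply, PiLp.zero_apply, Matrix.cons_val_zero, Matrix.cons_val_one, Matrix.cons_val,
      Fin.zero_eta, Fin.mk_one, Fin.reduceFinMk] <;>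
    ring

lemma inner_sub_faceNormal (z : Fin 4 → E3) {ℓ i : Fin 4} (h : i ≠ ℓ) :
    ⟪z ℓ - z i, faceNormal z ℓ⟫ = -tetraDet z := by
  rw [real_inner_comm]
  fin_cases ℓ <;> fin_cases i <;> (try exact absurd rfl h) <;>
    simp only [faceNormal, tetraDet, inner_cross3, det3, PiLp.sub_apply, Matrix.cons_val_zero,
      Matrix.cons_val_one, Matrix.cons_val, Fin.zero_eta, Fin.mk_one, Fin.reduceFinMk] <;>
    ring

lemma det3_faceNormal (z : Fin 4 → E3) :
    det3 (faceNormal z 1) (faceNormal z 2) (faceNormal z 3) = -tetraDet z ^ 2 := by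
  simp only [det3, faceNormal, tetraDet, cross3, WithLp.equiv_symm_apply, PiLp.sub_apply,
    Matrix.cons_val_zero, Matrix.cons_val_one, Matrix.cons_val]
  ring

lemma isFaceNormal_smul_faceNormal {z : Fin 4 → E3} (hD : tetraDet z ≠ 0) (ℓ : Fin 4) :
    IsFaceNormal z ℓ (tetraDet z • faceNormal z ℓ) :=
  isFaceNormal_of_inner_sub_eq (neg_lt_zero.2 (by positivity : 0 < tetraDet z ^ 2)) fun i hi => by
    rw [real_inner_smul_right, inner_sub_faceNormal z hi]
    ring

lemma span_faceNormal {z : Fin 4 → E3} (hD : tetraDet z ≠ 0) :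
    Submodule.span ℝ (Set.range ![faceNormal z 1, faceNormal z 2, faceNormal z 3]) = ⊤ := by
  rw [← det3_ne_zero_iff_span_eq_top, det3_faceNormal]
  exact neg_ne_zero.2 (pow_ne_zero 2 hD)

theorem vertices_not_in_closed_halfsphere_general
    (z v : Fin 4 → E3)
    (hz_span : Submodule.span ℝ (Set.range z) = ⊤)
    (hz_sum : ∑ i : Fin 4, z i = 0)
    (hv_uniq : ∀ (ℓ : Fin 4) (w : E3), ‖w‖ = 1 →
      (∀ i j : Fin 4, i ≠ ℓ → j ≠ ℓ → ⟪z i, w⟫ = ⟪z j, w⟫) →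
      (∀ i : Fin 4, i ≠ ℓ → ⟪z ℓ, w⟫ < ⟪z i, w⟫) → w = v ℓ)
    :
    ¬ ∃ w : E3, ‖w‖ = 1 ∧ ∀ i : Fin 4, 0 ≤ ⟪v i, w⟫ := by
  rintro ⟨w, hw_norm, hw⟩
  have hD : tetraDet z ≠ 0 :=
    (det3_ne_zero_iff_span_eq_top _ _ _).2 (span_sub_eq_top hz_sum hz_span)
  set n : Fin 4 → E3 := fun ℓ => tetraDet z • faceNormal z ℓ
  have hn_pos (ℓ : Fin 4) : 0 < ‖n ℓ‖ := norm_pos_iff.2 (isFaceNormal_smul_faceNormal hD ℓ).ne_zero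
  have hv (ℓ : Fin 4) : v ℓ = ‖n ℓ‖⁻¹ • n ℓ := by
    have hface := (isFaceNormal_smul_faceNormal hD ℓ).smul (inv_pos.2 (hn_pos ℓ))
    exact (hv_uniq ℓ _ (norm_smul_inv_norm (norm_pos_iff.1 (hn_pos ℓ))) hface.1 hface.2).symm
  have hn_w : ∀ ℓ, ⟪n ℓ, w⟫ = 0 := by
    have hsum : ∑ ℓ, n ℓ = 0 := by simp [n, ← Finset.smul_sum, sum_faceNormal]
    refine inner_eq_zero_of_sum_eq_zero_of_nonneg hsum fun ℓ => ?_
    have := hw ℓ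
    rw [hv ℓ, real_inner_smul_left] at this
    exact (mul_nonneg_iff_of_pos_left (inv_pos.2 (hn_pos ℓ))).1 this
  have hw0 : w = 0 := by
    refine eq_zero_of_forall_inner_eq_zero (span_faceNormal hD) fun i => ?_
    have := hn_w i.succ
    fin_cases i <;> simpa [n, real_inner_smul_left, hD] using this
  simp [hw0] at hw_norm

/-- Proposition (no closed half sphere): under the setup, the four vertices
`v₁, v₂, v₃, v₄` are not contained in any closed half sphere. -/
theorem vertices_not_in_closed_halfsphere
    (z v : Fin 4 → E3)
    (hz_inj : Function.Injective z)
    (hz_ne : ∀ i, z i ≠ 0)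
    (hz_span : Submodule.span ℝ (Set.range z) = ⊤)
    (hz_sum : ∑ i : Fin 4, z i = 0)
    (T : Fin 4 → Set (Metric.sphere (0 : E3) 1))
    (hT : ∀ i, T i = {x | ⟪(x : E3), z i⟫ =
      Finset.univ.sup' Finset.univ_nonempty fun j : Fin 4 => ⟪(x : E3), z j⟫})
    (hzT : ∀ i, z i = ∫ x in T i, (x : E3) ∂sphereArea)
    (hv_norm : ∀ ℓ, ‖v ℓ‖ = 1)
    (hv_eq : ∀ ℓ i j : Fin 4, i ≠ ℓ → j ≠ ℓ → ⟪z i, v ℓ⟫ = ⟪z j, v ℓ⟫)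
    (hv_lt : ∀ ℓ i : Fin 4, i ≠ ℓ → ⟪z ℓ, v ℓ⟫ < ⟪z i, v ℓ⟫)
    (hv_uniq : ∀ (ℓ : Fin 4) (w : E3), ‖w‖ = 1 →
      (∀ i j : Fin 4, i ≠ ℓ → j ≠ ℓ → ⟪z i, w⟫ = ⟪z j, w⟫) →
      (∀ i : Fin 4, i ≠ ℓ → ⟪z ℓ, w⟫ < ⟪z i, w⟫) → w = v ℓ)
    (θ : Fin 4 → Fin 4 → ℝ)
    (hθ : ∀ i j, θ i j = Real.arccos ⟪v i, v j⟫)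
    :
    ¬ ∃ w : E3, ‖w‖ = 1 ∧ ∀ i : Fin 4, 0 ≤ ⟪v i, w⟫ :=
  vertices_not_in_closed_halfsphere_general z v hz_span hz_sum hv_uniq
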